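/- arXiv:math/9907128 — 2 statements merged into one kernel-verified Lean document; each statement's English description precedes it below -/
import Mathlib

section
/- Every separable abelian topological group is topologically isomorphic to a subgroup of a monothetic topological group. -/
/-- An embedding of the abelian topological group `G` into a (Hausdorff)
monothetic topological group: a monothetic Hausdorff topological abelian group
`H` together with an injective continuous homomorphism `G →+ H` that is open
onto its image. -/
structure MonotheticEmbedding (G : Type) [AddCommGroup G]
    [TopologicalSpace G] where
  H : Type
  [grp : AddCommGroup H]
  [top : TopologicalSpace H]
  topgrp : IsTopologicalAddGroup H
  t2 : T2Space H
  monothetic : ∃ y : H, Dense ((AddSubgroup.zmultiples y : AddSubgroup H) : Set H)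
  f : G →+ H
  inj : Function.Injective f
  cont : Continuous f
  open_onto_image : ∀ U : Set G, IsOpen U →
    ∃ V : Set H, IsOpen V ∧ f '' U = V ∩ Set.range f

noncomputable section

namespace MonoEmbAux
open Finset Filter Set TopologicalSpace Topology

/-! ### Arithmetic: a rapidly growing sequence -/

/-- `Sq N = ∑_{n<N} 2^n * q n` where `q n = 1 + 2 * Sq n`. -/
def Sq : ℕ → ℕ
  | 0 => 0
  | N+1 => Sq N + 2 ^ N * (1 + 2 * Sq N)

/-- A rapidly growing sequence of positive integers. -/
def q (n : ℕ) : ℕ := 1 + 2 * Sq n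

lemma Sq_mono : Monotone Sq :=
  monotone_nat_of_le_succ fun n => by simp [Sq]

lemma le_Sq (k : ℕ) : k ≤ Sq k := by
  induction k with
  | zero => simp [Sq]
  | succ k ih =>
    have h2 : 1 ≤ 2 ^ k := Nat.one_le_two_pow
    have : Sq (k+1) = Sq k + 2 ^ k * (1 + 2 * Sq k) := rfl
    nlinarith

lemma sum_q (N : ℕ) : ∑ n ∈ range N, 2 ^ n * q n = Sq N := by
  induction N with
  | zero => simp [Sq]
  | succ N ih =>
    rw [sum_range_succ, ih]
    simp [Sq, q]

/-- Key lower bound: a nonzero bounded combination of the `q n` is large. -/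
lemma lower (c : ℕ → ℤ) (hbd : ∀ n, (c n).natAbs ≤ 2 ^ n) :
    ∀ M : ℕ, (∃ n, n < M ∧ c n ≠ 0) →
      ∃ N, N < M ∧ c N ≠ 0 ∧ (1 + Sq N : ℤ) ≤ |∑ n ∈ range M, c n * q n| := by
  intro M
  induction M with
  | zero => rintro ⟨n, h, -⟩; omega
  | succ M ih =>
    rintro ⟨n, hn, hcn⟩
    by_cases hM : c M = 0
    · have hn' : n < M := by
        rcases Nat.lt_succ_iff_lt_or_eq.mp hn with h | rfl
        · exact h
        · exact absurd hM hcn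
      obtain ⟨N, h1, h2, h3⟩ := ih ⟨n, hn', hcn⟩
      refine ⟨N, Nat.lt_succ_of_lt h1, h2, ?_⟩
      rwa [sum_range_succ, hM, zero_mul, add_zero]
    · refine ⟨M, Nat.lt_succ_self M, hM, ?_⟩
      rw [sum_range_succ]
      have h1 : |∑ n ∈ range M, c n * q n| ≤ (Sq M : ℤ) := by
        calc |∑ n ∈ range M, c n * q n| ≤ ∑ n ∈ range M, |c n * q n| :=
              Finset.abs_sum_le_sum_abs _ _
        _ ≤ ∑ n ∈ range M, ((2:ℤ) ^ n * q n) := by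
            refine Finset.sum_le_sum fun i _ => ?_
            rw [abs_mul, abs_of_nonneg (Int.natCast_nonneg (q i))]
            have hci : |c i| ≤ (2 ^ i : ℤ) := by
              rw [Int.abs_eq_natAbs]
              exact_mod_cast hbd i
            exact mul_le_mul_of_nonneg_right hci (Int.natCast_nonneg _)
        _ = (Sq M : ℤ) := by
            rw [← sum_q M]
            push_cast
            rfl
      have h2 : (q M : ℤ) ≤ |c M * q M| := by
        rw [abs_mul, abs_of_nonneg (Int.natCast_nonneg (q M))]
        have : (1:ℤ) ≤ |c M| := Int.one_le_abs (by exact_mod_cast hM)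
        nlinarith [Int.natCast_nonneg (q M)]
      have h3 : |c M * q M| - |∑ n ∈ range M, c n * q n| ≤
          |∑ n ∈ range M, c n * q n + c M * q M| := by
        have h4 := abs_sub_abs_le_abs_sub (c M * (q M : ℤ))
          (-(∑ n ∈ range M, c n * q n))
        rw [abs_neg, sub_neg_eq_add] at h4
        rw [add_comm (∑ n ∈ range M, c n * (q n : ℤ)) (c M * (q M : ℤ))]
        linarith
      have hqM : (q M : ℤ) = 1 + 2 * (Sq M : ℤ) := by
        unfold q; push_cast; ring
      linarith

lemma eq_zero_of_sum_eq_zero (c : ℕ → ℤ) (hbd : ∀ n, (c n).natAbs ≤ 2 ^ n) (M : ℕ)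
    (h : ∑ n ∈ range M, c n * q n = 0) : ∀ n, n < M → c n = 0 := by
  by_contra hc
  push_neg at hc
  obtain ⟨n, hn, hcn⟩ := hc
  obtain ⟨N, -, -, h3⟩ := lower c hbd M ⟨n, hn, hcn⟩
  rw [h] at h3
  simp only [abs_zero] at h3
  have : (0:ℤ) ≤ Sq N := Int.natCast_nonneg _
  linarith

lemma big_of_sum (c : ℕ → ℤ) (hbd : ∀ n, (c n).natAbs ≤ 2 ^ n) (k M : ℕ) (m : ℤ)
    (hsupp : ∀ n, n < k → c n = 0) (h : ∑ n ∈ range M, c n * q n = m) (hm : m ≠ 0) :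
    (1 + Sq k : ℤ) ≤ |m| := by
  have hex : ∃ n, n < M ∧ c n ≠ 0 := by
    by_contra hc
    push_neg at hc
    apply hm
    rw [← h]
    exact Finset.sum_eq_zero fun i hi => by rw [hc i (mem_range.mp hi), zero_mul]
  obtain ⟨N, -, hN, h3⟩ := lower c hbd M hex
  rw [h] at h3
  have hkN : k ≤ N := by
    by_contra hk
    exact hN (hsupp N (by omega))
  have := Sq_mono hkN
  have : (Sq k : ℤ) ≤ Sq N := by exact_mod_cast this
  linarith

/-! ### The filter basis on `G × ℤ` -/

variable {G : Type} [AddCommGroup G] [TopologicalSpace G] [IsTopologicalAddGroup G]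

/-- Basic neighbourhoods of `0` in `G × ℤ`. -/
def bset (a : ℕ → G) (U : Set G) (k : ℕ) : Set (G × ℤ) :=
  {p | ∃ c : ℕ → ℤ, ∃ N : ℕ,
    (∀ n, n < 2 * k → c n = 0) ∧
    (∀ n, (c n).natAbs ≤ 2 ^ (n - 2 * k)) ∧
    (∀ n, N ≤ n → c n = 0) ∧
    p.2 = ∑ n ∈ range N, c n * q n ∧
    p.1 + ∑ n ∈ range N, c n • a n ∈ U}

lemma sum_ext {A : Type*} [AddCommMonoid A] (f : ℕ → A) {N M : ℕ}
    (h : ∀ n, N ≤ n → f n = 0) (hNM : N ≤ M) :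
    ∑ n ∈ range M, f n = ∑ n ∈ range N, f n :=
  (Finset.sum_subset (range_subset_range.2 hNM)
    (fun x _ hx => h x (by simpa using hx))).symm

/-- The coarse bound `2^(n - 2k) ≤ 2^n`. -/
lemma bd_coarse {c : ℕ → ℤ} {k : ℕ} (hbd : ∀ n, (c n).natAbs ≤ 2 ^ (n - 2 * k)) :
    ∀ n, (c n).natAbs ≤ 2 ^ n :=
  fun n => le_trans (hbd n) (Nat.pow_le_pow_right (by norm_num) (Nat.sub_le _ _))

/-- The group filter basis on `G × ℤ`. -/
def gfb (a : ℕ → G) : AddGroupFilterBasis (G × ℤ) := by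
  refine addGroupFilterBasisOfComm
    {W | ∃ U ∈ 𝓝 (0:G), ∃ k : ℕ, W = bset a U k} ⟨bset a univ 0, univ, univ_mem, 0, rfl⟩
    ?_ ?_ ?_ ?_
  · -- inter
    rintro _ _ ⟨U, hU, k, rfl⟩ ⟨U', hU', k', rfl⟩
    refine ⟨bset a (U ∩ U') (max k k'), ⟨U ∩ U', inter_mem hU hU', _, rfl⟩, ?_⟩
    rintro p ⟨c, N, hsupp, hbd, htail, hm, hg⟩
    constructor
    · exact ⟨c, N, fun n hn => hsupp n (by omega),
        fun n => le_trans (hbd n) (Nat.pow_le_pow_right (by norm_num) (by omega)),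
        htail, hm, hg.1⟩
    · exact ⟨c, N, fun n hn => hsupp n (by omega),
        fun n => le_trans (hbd n) (Nat.pow_le_pow_right (by norm_num) (by omega)),
        htail, hm, hg.2⟩
  · -- zero
    rintro _ ⟨U, hU, k, rfl⟩
    exact ⟨0, 0, fun _ _ => rfl, fun n => by simp, fun _ _ => rfl, by simp,
      by simpa using mem_of_mem_nhds hU⟩
  · -- add
    rintro _ ⟨U, hU, k, rfl⟩
    obtain ⟨U', hU', hUU'⟩ := exists_nhds_zero_half hU
    refine ⟨bset a U' (k+1), ⟨U', hU', k+1, rfl⟩, ?_⟩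
    rintro x ⟨p, hp, p', hp', rfl⟩
    obtain ⟨c, N, hsupp, hbd, htail, hm, hg⟩ := hp
    obtain ⟨c', N', hsupp', hbd', htail', hm', hg'⟩ := hp'
    refine ⟨c + c', max N N', ?_, ?_, ?_, ?_, ?_⟩
    · intro n hn
      have := hsupp n (by omega)
      have := hsupp' n (by omega)
      simp_all [Pi.add_apply]
    · intro n
      rcases lt_or_ge n (2 * (k+1)) with hn | hn
      · have := hsupp n hn
        have := hsupp' n hn
        simp_all [Pi.add_apply]
      · have h1 := hbd n
        have h2 := hbd' n
        have hle : (c n + c' n).natAbs ≤ (c n).natAbs + (c' n).natAbs :=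
          Int.natAbs_add_le _ _
        have : 2 ^ (n - 2 * (k+1)) + 2 ^ (n - 2 * (k+1)) ≤ 2 ^ (n - 2 * k) := by
          rw [← two_mul, ← pow_succ']
          exact Nat.pow_le_pow_right (by norm_num) (by omega)
        calc ((c + c') n).natAbs = (c n + c' n).natAbs := rfl
          _ ≤ (c n).natAbs + (c' n).natAbs := hle
          _ ≤ 2 ^ (n - 2 * (k+1)) + 2 ^ (n - 2 * (k+1)) := Nat.add_le_add h1 h2
          _ ≤ 2 ^ (n - 2 * k) := this
    · intro n hn
      have := htail n (le_trans (le_max_left _ _) hn)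
      have := htail' n (le_trans (le_max_right _ _) hn)
      simp_all [Pi.add_apply]
    · have e1 : ∑ n ∈ range (max N N'), c n * q n = ∑ n ∈ range N, c n * q n :=
        sum_ext _ (fun n hn => by rw [htail n hn, zero_mul]) (le_max_left _ _)
      have e2 : ∑ n ∈ range (max N N'), c' n * q n = ∑ n ∈ range N', c' n * q n :=
        sum_ext _ (fun n hn => by rw [htail' n hn, zero_mul]) (le_max_right _ _)
      show (p + p').2 = _
      rw [Prod.snd_add, hm, hm', ← e1, ← e2, ← Finset.sum_add_distrib]
      exact Finset.sum_congr rfl fun i _ => by simp [Pi.add_apply, add_mul]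
    · have e1 : ∑ n ∈ range (max N N'), c n • a n = ∑ n ∈ range N, c n • a n :=
        sum_ext _ (fun n hn => by rw [htail n hn, zero_smul]) (le_max_left _ _)
      have e2 : ∑ n ∈ range (max N N'), c' n • a n = ∑ n ∈ range N', c' n • a n :=
        sum_ext _ (fun n hn => by rw [htail' n hn, zero_smul]) (le_max_right _ _)
      have : ∑ n ∈ range (max N N'), (c + c') n • a n
          = (∑ n ∈ range N, c n • a n) + ∑ n ∈ range N', c' n • a n := by
        rw [← e1, ← e2, ← Finset.sum_add_distrib]
        exact Finset.sum_congr rfl fun i _ => by simp [Pi.add_apply, add_smul]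
      show (p + p').1 + _ ∈ U
      rw [Prod.fst_add, this]
      have : p.1 + p'.1 + ((∑ n ∈ range N, c n • a n) + ∑ n ∈ range N', c' n • a n)
          = (p.1 + ∑ n ∈ range N, c n • a n) + (p'.1 + ∑ n ∈ range N', c' n • a n) := by
        abel
      rw [this]
      exact hUU' _ hg _ hg'
  · -- neg
    rintro _ ⟨U, hU, k, rfl⟩
    have hnegU : (fun x : G => -x) ⁻¹' U ∈ 𝓝 (0:G) := by
      have : ContinuousAt (fun x : G => -x) 0 := continuous_neg.continuousAt
      apply this.preimage_mem_nhds
      rwa [neg_zero]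
    refine ⟨bset a ((fun x : G => -x) ⁻¹' U) k, ⟨_, hnegU, k, rfl⟩, ?_⟩
    rintro p ⟨c, N, hsupp, hbd, htail, hm, hg⟩
    refine ⟨-c, N, fun n hn => by simp [hsupp n hn], fun n => by simpa using hbd n,
      fun n hn => by simp [htail n hn], ?_, ?_⟩
    · show (-p).2 = _
      rw [Prod.snd_neg, hm, ← Finset.sum_neg_distrib]
      exact Finset.sum_congr rfl fun i _ => by simp
    · show (-p).1 + _ ∈ U
      have : ∑ n ∈ range N, (-c) n • a n = -∑ n ∈ range N, c n • a n := by
        rw [← Finset.sum_neg_distrib]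
        exact Finset.sum_congr rfl fun i _ => by simp
      rw [Prod.fst_neg, this]
      have h2 : -p.1 + -∑ n ∈ range N, c n • a n = -(p.1 + ∑ n ∈ range N, c n • a n) := by
        abel
      rw [h2]
      exact hg

/-! ### Properties of the topology -/

variable (a : ℕ → G)

lemma mem_gfb (U : Set G) (hU : U ∈ 𝓝 (0:G)) (k : ℕ) : bset a U k ∈ gfb a :=
  ⟨U, hU, k, rfl⟩

/-- Hausdorffness. -/
lemma gfb_t2 [T2Space G] : @T2Space (G × ℤ) (gfb a).topology := by
  letI := (gfb a).topology
  haveI : IsTopologicalAddGroup (G × ℤ) := (gfb a).isTopologicalAddGroup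
  apply IsTopologicalAddGroup.t2Space_of_zero_sep
  rintro ⟨g, m⟩ hx
  by_cases hm : m = 0
  · subst hm
    have hg : g ≠ 0 := fun h => hx (by simp [h, Prod.ext_iff])
    have hU : ({g}ᶜ : Set G) ∈ 𝓝 (0:G) :=
      isOpen_compl_singleton.mem_nhds (by simpa using Ne.symm hg)
    refine ⟨bset a ({g}ᶜ) 0, (gfb a).mem_nhds_zero (mem_gfb a _ hU 0), ?_⟩
    rintro ⟨c, N, hsupp, hbd, htail, hm2, hg2⟩
    have hz := eq_zero_of_sum_eq_zero c (bd_coarse hbd) N hm2.symm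
    have : ∑ n ∈ range N, c n • a n = 0 :=
      Finset.sum_eq_zero fun i hi => by rw [hz i (mem_range.mp hi), zero_smul]
    rw [this, add_zero] at hg2
    exact hg2 rfl
  · set k := m.natAbs with hk
    refine ⟨bset a univ k, (gfb a).mem_nhds_zero (mem_gfb a _ univ_mem k), ?_⟩
    rintro ⟨c, N, hsupp, hbd, htail, hm2, -⟩
    have hbig := big_of_sum c (bd_coarse hbd) (2*k) N m
      (fun n hn => hsupp n hn) hm2.symm hm
    have h1 : (2*k : ℕ) ≤ Sq (2*k) := le_Sq _
    have h2 : |m| = (k : ℤ) := by rw [hk, Int.abs_eq_natAbs]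
    rw [h2] at hbig
    have h3 : (Sq (2*k) : ℤ) ≥ ((2*k : ℕ) : ℤ) := by exact_mod_cast h1
    push_cast at h3 hbig
    omega

/-- Density of the multiples of `(0, 1)`. -/
lemma gfb_dense
    (hd : ∀ O : Set G, IsOpen O → O.Nonempty → ∀ k : ℕ, ∃ n, k ≤ n ∧ a n ∈ O) :
    @Dense (G × ℤ) (gfb a).topology
      ((AddSubgroup.zmultiples ((0:G), (1:ℤ)) : AddSubgroup (G × ℤ)) : Set (G × ℤ)) := by
  letI := (gfb a).topology
  haveI : IsTopologicalAddGroup (G × ℤ) := (gfb a).isTopologicalAddGroup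
  intro x
  rw [mem_closure_iff_nhds_basis ((gfb a).nhds_hasBasis x)]
  rintro V ⟨U, hU, k, rfl⟩
  obtain ⟨g, m⟩ := x
  -- pick a good index
  have hO : IsOpen {z : G | -g + z ∈ interior U} :=
    isOpen_interior.preimage (continuous_const.add continuous_id)
  have hOne : ({z : G | -g + z ∈ interior U}).Nonempty :=
    ⟨g, by simp [mem_interior_iff_mem_nhds.2 hU]⟩
  obtain ⟨n₀, hn₀, han₀⟩ := hd _ hO hOne (2*k)
  refine ⟨(m + q n₀) • ((0:G), (1:ℤ)), ?_, ?_⟩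
  · exact AddSubgroup.zsmul_mem_zmultiples _ _
  · refine ⟨((-g : G), (q n₀ : ℤ)), ?_, ?_⟩
    · refine ⟨fun n => if n = n₀ then 1 else 0, n₀ + 1, ?_, ?_, ?_, ?_, ?_⟩
      · intro n hn
        have : n ≠ n₀ := by omega
        simp [this]
      · intro n
        by_cases h : n = n₀ <;> simp [h, Nat.one_le_two_pow]
      · intro n hn
        have : n ≠ n₀ := by omega
        simp [this]
      · show (q n₀ : ℤ) = _
        have : ∑ n ∈ range (n₀+1), (if n = n₀ then (1:ℤ) else 0) * q n = (q n₀ : ℤ) := by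
          rw [Finset.sum_eq_single n₀]
          · simp
          · intro b _ hb; simp [hb]
          · intro h; exact absurd (Finset.mem_range.mpr (Nat.lt_succ_self _)) h
        rw [this]
      · show -g + _ ∈ U
        have : ∑ n ∈ range (n₀+1), (if n = n₀ then (1:ℤ) else 0) • a n = a n₀ := by
          rw [Finset.sum_eq_single n₀]
          · simp
          · intro b _ hb; simp [hb]
          · intro h; exact absurd (Finset.mem_range.mpr (Nat.lt_succ_self _)) h
        rw [this]
        exact interior_subset han₀
    · have h1 : (m + q n₀) • ((0:G), (1:ℤ)) = (0, m + q n₀) := by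
        ext
        · simp
        · simp
      rw [h1, Prod.ext_iff]
      constructor
      · show g + -g = 0
        abel
      · show m + (q n₀ : ℤ) = m + q n₀
        rfl

/-- Continuity of the inclusion. -/
lemma gfb_cont : @Continuous G (G × ℤ) _ (gfb a).topology (AddMonoidHom.inl G ℤ) := by
  letI := (gfb a).topology
  haveI : IsTopologicalAddGroup (G × ℤ) := (gfb a).isTopologicalAddGroup
  apply continuous_of_continuousAt_zero (AddMonoidHom.inl G ℤ)
  unfold ContinuousAt
  rw [map_zero]
  rw [((gfb a).nhds_zero_hasBasis).tendsto_right_iff]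
  rintro V ⟨U, hU, k, rfl⟩
  filter_upwards [hU] with g hg
  exact ⟨0, 0, fun _ _ => rfl, fun n => by simp, fun _ _ => rfl, by simp,
    by simpa using hg⟩

/-- Openness onto the image. -/
lemma gfb_open (U : Set G) (hUo : IsOpen U) :
    ∃ V : Set (G × ℤ), @IsOpen (G × ℤ) (gfb a).topology V ∧
      (AddMonoidHom.inl G ℤ) '' U = V ∩ Set.range (AddMonoidHom.inl G ℤ) := by
  letI := (gfb a).topology
  haveI : IsTopologicalAddGroup (G × ℤ) := (gfb a).isTopologicalAddGroup
  refine ⟨⋃ (x : G) (_ : x ∈ U),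
    interior ((fun y => ((x, (0:ℤ))) + y) '' bset a ((fun z => x + z) ⁻¹' U) 0),
    isOpen_iUnion fun _ => isOpen_iUnion fun _ => isOpen_interior, ?_⟩
  apply Set.Subset.antisymm
  · rintro _ ⟨x, hx, rfl⟩
    have hUx : (fun z => x + z) ⁻¹' U ∈ 𝓝 (0:G) := by
      apply ContinuousAt.preimage_mem_nhds (continuous_const.add continuous_id).continuousAt
      simpa using hUo.mem_nhds hx
    constructor
    · apply Set.mem_biUnion hx
      rw [mem_interior_iff_mem_nhds]
      exact ((gfb a).nhds_hasBasis ((x, (0:ℤ)))).mem_of_mem (mem_gfb a _ hUx 0)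
    · exact ⟨x, rfl⟩
  · rintro z ⟨hzV, g', rfl⟩
    simp only [Set.mem_iUnion] at hzV
    obtain ⟨x, hx, hz⟩ := hzV
    have hz' := interior_subset hz
    obtain ⟨b, hb, hbz⟩ := hz'
    obtain ⟨c, N, hsupp, hbd, htail, hm2, hg2⟩ := hb
    have hb2 : b.2 = 0 := by
      have := congrArg Prod.snd hbz
      simpa using this
    rw [hb2] at hm2
    have hz0 := eq_zero_of_sum_eq_zero c (bd_coarse hbd) N hm2.symm
    have hsum0 : ∑ n ∈ range N, c n • a n = 0 :=
      Finset.sum_eq_zero fun i hi => by rw [hz0 i (mem_range.mp hi), zero_smul]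
    rw [hsum0, add_zero] at hg2
    have hb1 : x + b.1 = g' := by
      have := congrArg Prod.fst hbz
      simpa using this
    refine ⟨g', ?_, rfl⟩
    rw [← hb1]
    exact hg2

end MonoEmbAux

open MonoEmbAux TopologicalSpace in
/-- Every separable (Hausdorff) abelian topological group is topologically
isomorphic to a subgroup of a monothetic topological group. -/
theorem separable_abelian_embeds_into_monothetic
    (G : Type) [AddCommGroup G] [TopologicalSpace G] [IsTopologicalAddGroup G]
    [T2Space G] [TopologicalSpace.SeparableSpace G] :
    Nonempty (MonotheticEmbedding G) := by
  classical
  haveI : Nonempty G := ⟨0⟩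
  -- a dense sequence hitting every nonempty open set with arbitrarily large indices
  obtain ⟨a, hd⟩ : ∃ a : ℕ → G,
      ∀ O : Set G, IsOpen O → O.Nonempty → ∀ k : ℕ, ∃ n, k ≤ n ∧ a n ∈ O := by
    refine ⟨fun n => denseSeq G (Nat.unpair n).1, fun O hO hOne k => ?_⟩
    obtain ⟨j, hj⟩ := (denseRange_denseSeq G).exists_mem_open hO hOne
    exact ⟨Nat.pair j k, Nat.right_le_pair j k, by show denseSeq G (Nat.unpair (Nat.pair j k)).1 ∈ O; rw [Nat.unpair_pair]; exact hj⟩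
  refine ⟨{
    H := G × ℤ
    grp := inferInstance
    top := (gfb a).topology
    topgrp := (gfb a).isTopologicalAddGroup
    t2 := gfb_t2 a
    monothetic := ⟨((0:G), (1:ℤ)), gfb_dense a hd⟩
    f := AddMonoidHom.inl G ℤ
    inj := fun x y h => by simpa using congrArg Prod.fst h
    cont := gfb_cont a
    open_onto_image := gfb_open a }⟩
end
end

section
/- Let (X,*) be a pointed set with a family 𝔑 of pseudometrics, G an abelian topological group whose topology is generated by a family 𝔓 of translation-invariant pseudometrics, and f : X → G a map with f(*) = 0 such that for every d ∈ 𝔓 there is ρ ∈ 𝔑 making f : (X,ρ) → (G,d) Lipschitz. Then the unique group homomorphism f̄ : A(X,*) → G extending f is continuous when A(X,*) carries the topology generated by the Graev pseudometrics {ρ̄ : ρ ∈ 𝔑}. -/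
section GraevExtension

variable (X : Type) [DecidableEq X] (pt : X)

/-- The canonical injection of the pointed set `(X, pt)` into the free abelian
group `A(X, pt)` on `X \ {pt}` (realised as `{y // y ≠ pt} →₀ ℤ`), sending the
basepoint to `0`. -/
noncomputable def jFreeA : X → ({y : X // y ≠ pt} →₀ ℤ) :=
  fun x => if h : x = pt then 0 else Finsupp.single ⟨x, h⟩ 1

/-- `q` is a pseudometric. -/
def IsPseudometric {A : Type} (q : A → A → ℝ) : Prop :=
  (∀ a, q a a = 0) ∧ (∀ a b, q a b = q b a) ∧ (∀ a b c, q a c ≤ q a b + q b c)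

/-- `q` is a translation-invariant pseudometric on the abelian group `A`. -/
def IsInvariantPseudometric {A : Type} [AddCommGroup A] (q : A → A → ℝ) : Prop :=
  IsPseudometric q ∧ ∀ a b c, q (a + c) (b + c) = q a b

/-- The topology generated by a family of (pseudo)distance functions, with the
open balls as a subbasis. -/
def topOfDistFamily {A : Type} (R : Set (A → A → ℝ)) : TopologicalSpace A :=
  TopologicalSpace.generateFrom
    {S | ∃ q ∈ R, ∃ a : A, ∃ ε : ℝ, 0 < ε ∧ S = {b | q a b < ε}}

lemma pseudo_nonneg {A : Type} {q : A → A → ℝ} (h : IsPseudometric q) (a b : A) :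
    0 ≤ q a b := by
  have h1 := h.1 a
  have h2 := h.2.1 a b
  have h3 := h.2.2 a b a
  linarith

/-- Let `(X, pt)` be a pointed set with a family `𝔑` of pseudometrics, `G` an
abelian topological group whose topology is generated by a family `𝔓` of
translation-invariant pseudometrics, and `f : X → G` a map with `f pt = 0`
such that for every `d ∈ 𝔓` there is `ρ ∈ 𝔑` making `f : (X,ρ) → (G,d)`
Lipschitz.  Then the unique homomorphism `f̄ : A(X, pt) →+ G` extending `f` is
continuous for the topology on `A(X, pt)` generated by the Graev pseudometrics
`ρ̄`, `ρ ∈ 𝔑`. -/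
theorem graev_extension_continuous
    (𝔑 : Set (X → X → ℝ)) (h𝔑 : ∀ ρ ∈ 𝔑, IsPseudometric ρ)
    (Graev : (X → X → ℝ) → (({y : X // y ≠ pt} →₀ ℤ) → ({y : X // y ≠ pt} →₀ ℤ) → ℝ))
    (hGraev : ∀ ρ ∈ 𝔑, IsGreatest
      {q | IsInvariantPseudometric q ∧
        ∀ x y : X, q (jFreeA X pt x) (jFreeA X pt y) = ρ x y}
      (Graev ρ))
    (G : Type) [AddCommGroup G] [tG : TopologicalSpace G] [IsTopologicalAddGroup G]
    (𝔓 : Set (G → G → ℝ)) (h𝔓 : ∀ d ∈ 𝔓, IsInvariantPseudometric d)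
    (hgen : tG = topOfDistFamily 𝔓)
    (f : X → G) (hfpt : f pt = 0)
    (hLip : ∀ d ∈ 𝔓, ∃ ρ ∈ 𝔑, ∃ C : ℝ, 0 ≤ C ∧
      ∀ x y : X, d (f x) (f y) ≤ C * ρ x y) :
    ∀ fbar : ({y : X // y ≠ pt} →₀ ℤ) →+ G,
      (∀ x : X, fbar (jFreeA X pt x) = f x) →
      @Continuous _ _ (topOfDistFamily {q | ∃ ρ ∈ 𝔑, q = Graev ρ}) tG fbar := by
  intro fbar hfbar
  subst hgen
  -- key estimate: for each d ∈ 𝔓 there are ρ ∈ 𝔑 and C' > 0 with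
  -- d (fbar a) (fbar b) ≤ C' * Graev ρ a b
  have key : ∀ d ∈ 𝔓, ∃ ρ ∈ 𝔑, ∃ C' : ℝ, 0 < C' ∧
      ∀ a b, d (fbar a) (fbar b) ≤ C' * Graev ρ a b := by
    intro d hd
    obtain ⟨ρ, hρ, C, hC0, hC⟩ := hLip d hd
    obtain ⟨⟨hdrefl, hdsymm, hdtri⟩, hdinv⟩ := h𝔓 d hd
    have hρps := h𝔑 ρ hρ
    obtain ⟨hρrefl, hρsymm, hρtri⟩ := hρps
    set C' : ℝ := max C 1 with hC'def
    have hC' : (0 : ℝ) < C' := lt_of_lt_of_le one_pos (le_max_right _ _)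
    refine ⟨ρ, hρ, C', hC', ?_⟩
    set q : ({y : X // y ≠ pt} →₀ ℤ) → ({y : X // y ≠ pt} →₀ ℤ) → ℝ :=
      fun a b => d (fbar a) (fbar b) / C' with hq
    -- q is an invariant pseudometric
    have hqinv : IsInvariantPseudometric q := by
      refine ⟨⟨fun a => by simp [hq, hdrefl], fun a b => by simp [hq, hdsymm (fbar a)],
        fun a b c => ?_⟩, fun a b c => ?_⟩
      · have h1 := hdtri (fbar a) (fbar b) (fbar c)
        simp only [hq]
        rw [← add_div, div_le_div_iff_of_pos_right hC']
        exact h1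
      · simp only [hq, map_add, hdinv]
    -- Graev ρ is an invariant pseudometric extending ρ
    obtain ⟨⟨hGinv, hGext⟩, hGub⟩ := hGraev ρ hρ
    -- q ≤ ρ on the image of jFreeA
    have hqle : ∀ x y : X, q (jFreeA X pt x) (jFreeA X pt y) ≤ ρ x y := by
      intro x y
      simp only [hq, hfbar]
      rw [div_le_iff₀ hC']
      calc d (f x) (f y) ≤ C * ρ x y := hC x y
        _ ≤ ρ x y * C' := by
            have := pseudo_nonneg (h𝔑 ρ hρ) x y
            have hCC' : C ≤ C' := le_max_left _ _
            nlinarith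
    -- max q (Graev ρ) is an invariant pseudometric extending ρ
    have hmax : (fun a b => max (q a b) (Graev ρ a b)) ∈
        {q' | IsInvariantPseudometric q' ∧
          ∀ x y : X, q' (jFreeA X pt x) (jFreeA X pt y) = ρ x y} := by
      obtain ⟨⟨hGrefl, hGsymm, hGtri⟩, hGinvt⟩ := hGinv
      refine ⟨⟨⟨fun a => by simp [hqinv.1.1 a, hGrefl a], fun a b => by
        show q a b ⊔ Graev ρ a b = q b a ⊔ Graev ρ b a
        rw [hqinv.1.2.1 a b, hGsymm a b], fun a b c => ?_⟩, fun a b c => by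
        show q (a + c) (b + c) ⊔ Graev ρ (a + c) (b + c) = q a b ⊔ Graev ρ a b
        rw [hqinv.2 a b c, hGinvt a b c]⟩, fun x y => ?_⟩
      · show q a c ⊔ Graev ρ a c ≤ (q a b ⊔ Graev ρ a b) + (q b c ⊔ Graev ρ b c)
        refine max_le ?_ ?_
        · exact le_trans (hqinv.1.2.2 a b c)
            (add_le_add (le_max_left _ _) (le_max_left _ _))
        · exact le_trans (hGtri a b c)
            (add_le_add (le_max_right _ _) (le_max_right _ _))
      · show q (jFreeA X pt x) (jFreeA X pt y) ⊔ Graev ρ (jFreeA X pt x) (jFreeA X pt y) = ρ x y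
        rw [hGext x y]
        exact max_eq_right (hqle x y)
    have hle : ∀ a b, q a b ≤ Graev ρ a b := by
      intro a b
      have h1 := hGub hmax
      have h2 := h1 a b
      exact le_trans (le_max_left _ _) h2
    intro a b
    have := hle a b
    rw [hq] at this
    simp only at this
    rw [div_le_iff₀ hC'] at this
    linarith [this]
  -- continuity
  letI : TopologicalSpace ({y : X // y ≠ pt} →₀ ℤ) :=
    topOfDistFamily {q | ∃ ρ ∈ 𝔑, q = Graev ρ}
  refine continuous_generateFrom_iff.mpr ?_
  rintro s ⟨d, hd, a, ε, hε, rfl⟩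
  rw [isOpen_iff_forall_mem_open]
  intro g0 hg0
  simp only [Set.mem_preimage, Set.mem_setOf_eq] at hg0
  obtain ⟨ρ, hρ, C', hC', hkey⟩ := key d hd
  obtain ⟨⟨⟨hGrefl, hGsymm, hGtri⟩, hGinvt⟩, hGext⟩ := (hGraev ρ hρ).1
  obtain ⟨⟨hdrefl, hdsymm, hdtri⟩, hdinv⟩ := h𝔓 d hd
  set δ : ℝ := (ε - d a (fbar g0)) / C' with hδdef
  have hδ : 0 < δ := div_pos (by linarith) hC'
  refine ⟨{g | Graev ρ g0 g < δ}, ?_, ?_, ?_⟩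
  · intro g hg
    simp only [Set.mem_setOf_eq] at hg
    simp only [Set.mem_preimage, Set.mem_setOf_eq]
    have h1 := hdtri a (fbar g0) (fbar g)
    have h2 := hkey g0 g
    have h3 : C' * Graev ρ g0 g < C' * δ := by
      exact (mul_lt_mul_iff_right₀ hC').mpr hg
    have h4 : C' * δ = ε - d a (fbar g0) := by
      rw [hδdef, mul_div_cancel₀ _ (ne_of_gt hC')]
    linarith
  · exact TopologicalSpace.isOpen_generateFrom_of_mem
      ⟨Graev ρ, ⟨ρ, hρ, rfl⟩, g0, δ, hδ, rfl⟩
  · simp only [Set.mem_setOf_eq, hGrefl g0]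
    exact hδ

end GraevExtension
end
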